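/- Let h ∈ ℝ³ with ‖h‖₂ = 1 and let {r_λ}_{λ∈[0,1]} ⊂ ℝ³ be a continuous family of Bloch vectors with ‖r_λ‖₂ ≤ 1, h·r_λ = E₀ for all λ, and such that S(ρ(r_λ)) is strictly increasing in λ. Define λ⋆ := inf{λ : ‖r_λ‖₁ ≤ 1} (the first λ at which ρ(r_λ) is a stabilizer state). Then the set of λ for which S(ρ(r_λ)) < min{S(ρ(s)) : ‖s‖₁ ≤ 1, h·s = E₀} is an initial interval [0, λ_crt) with λ_crt ≤ λ⋆, and λ_crt = λ⋆ if and only if ‖r_{λ⋆}‖₂ = max{‖s‖₂ : ‖s‖₁ ≤ 1, h·s = E₀}. -/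

import Mathlib

open Matrix BigOperators

noncomputable section

/-- The Pauli X matrix. -/
def PX : Matrix (Fin 2) (Fin 2) ℂ := !![0, 1; 1, 0]
/-- The Pauli Y matrix. -/
def PY : Matrix (Fin 2) (Fin 2) ℂ := !![0, -Complex.I; Complex.I, 0]
/-- The Pauli Z matrix. -/
def PZ : Matrix (Fin 2) (Fin 2) ℂ := !![1, 0; 0, -1]

/-- The single-qubit state `ρ(r) = ½(I + r·σ)` with Bloch vector `r`. -/
def blochRho (r : Fin 3 → ℝ) : Matrix (Fin 2) (Fin 2) ℂ :=
  (2⁻¹ : ℂ) • (1 + (r 0 : ℂ) • PX + (r 1 : ℂ) • PY + (r 2 : ℂ) • PZ)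

/-- Euclidean norm `‖r‖₂` on `ℝ³`. -/
def norm2 (r : Fin 3 → ℝ) : ℝ := Real.sqrt (∑ i, r i ^ 2)

/-- `ℓ¹` norm `‖r‖₁` on `ℝ³`. -/
def norm1 (r : Fin 3 → ℝ) : ℝ := ∑ i, |r i|

/-- Euclidean inner product on `ℝ³`. -/
def dot3 (h r : Fin 3 → ℝ) : ℝ := ∑ i, h i * r i

/-- Von Neumann entropy `S(ρ) = −tr(ρ log ρ)`, computed via the eigenvalues of a
Hermitian matrix (junk value `0` for non-Hermitian input). -/
def vnEntropy {m : Type} [Fintype m] [DecidableEq m] (ρ : Matrix m m ℂ) : ℝ :=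
  if h : ρ.IsHermitian then ∑ i, Real.negMulLog (h.eigenvalues i) else 0

/-- The binary entropy `H₂(p) = −p log p − (1−p) log (1−p)`. -/
def binEnt (p : ℝ) : ℝ := Real.negMulLog p + Real.negMulLog (1 - p)

/-- The minimal eigenvalue `E_gs(H)` of a matrix. -/
def minEig {m : Type} [Fintype m] [DecidableEq m] (H : Matrix m m ℂ) : ℝ :=
  sInf {E : ℝ | ∃ ψ : m → ℂ, ψ ≠ 0 ∧ H.mulVec ψ = (E : ℂ) • ψ}

/-!
The entropy of `ρ(s)` depends only on `‖s‖₂`: the eigenvalues are `(1 ± ‖s‖₂)/2`, so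
`S(ρ(s)) = H₂((1 + ‖s‖₂)/2)`, strictly decreasing in `‖s‖₂ ∈ [0, 1]`. Hence the minimal
entropy on the stabilizer slice is attained at its point of largest radius `R`, a state of the
family is detected iff `‖r_λ‖₂ > R`, and monotonicity of the entropy makes `λ ↦ ‖r_λ‖₂`
strictly decreasing. Since `r_{λ⋆}` lies in the slice, `‖r_{λ⋆}‖₂ ≤ R`, so the intermediate
value theorem yields a threshold `λ_crt ≤ λ⋆` at which the radius crosses `R`, and
`λ_crt = λ⋆` exactly when `‖r_{λ⋆}‖₂ = R`.
-/

open Set Real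

theorem StrictAntiOn.exists_setOf_lt_eq_Ico {g : ℝ → ℝ} {a b : ℝ}
    (hanti : StrictAntiOn g (Icc a b)) (hcont : ContinuousOn g (Icc a b)) {R μ : ℝ}
    (hμ : μ ∈ Icc a b) (hgμ : g μ ≤ R) :
    ∃ c ≤ μ, {x | x ∈ Icc a b ∧ R < g x} = Ico a c ∧ (c = μ ↔ g μ = R) := by
  have ha : a ∈ Icc a b := left_mem_Icc.2 (hμ.1.trans hμ.2)
  by_cases hga : R < g a
  · obtain ⟨c, hc, hgc⟩ : R ∈ g '' Icc a μ :=
      intermediate_value_Icc' hμ.1 (hcont.mono (Icc_subset_Icc_right hμ.2)) ⟨hgμ, hga.le⟩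
    have hcab : c ∈ Icc a b := ⟨hc.1, hc.2.trans hμ.2⟩
    refine ⟨c, hc.2, ?_, ?_⟩
    · ext x
      simp only [mem_ofPred_eq, mem_Ico, mem_Icc]
      constructor
      · rintro ⟨hx, hRx⟩
        exact ⟨hx.1, (hanti.lt_iff_gt hcab hx).1 (hgc ▸ hRx)⟩
      · rintro ⟨hax, hxc⟩
        have hx : x ∈ Icc a b := ⟨hax, hxc.le.trans hcab.2⟩
        exact ⟨hx, hgc ▸ hanti hx hcab hxc⟩
    · rw [← hgc, hanti.eq_iff_eq hμ hcab, eq_comm]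
  · have hempty : {x | x ∈ Icc a b ∧ R < g x} = ∅ :=
      eq_empty_of_forall_notMem fun x ⟨hx, hRx⟩ ↦
        hga (hRx.trans_le ((hanti.le_iff_ge hx ha).2 hx.1))
    by_cases hR : g μ = R
    · have hμa : μ = a :=
        le_antisymm ((hanti.le_iff_ge ha hμ).1 (hR ▸ not_lt.1 hga)) hμ.1
      exact ⟨μ, le_rfl, by rw [hempty, hμa, Ico_self], iff_of_true rfl hR⟩
    -- The empty set is `Ico a c` for every `c ≤ a`; `c < a` keeps `c ≠ μ` even if `μ = a`.
    · refine ⟨a - 1, by linarith [hμ.1], ?_, iff_of_false (by linarith [hμ.1]) hR⟩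
      rw [hempty, Ico_eq_empty (by linarith)]

theorem Matrix.IsHermitian.vnEntropy_eq_binEntropy {ρ : Matrix (Fin 2) (Fin 2) ℂ}
    (hρ : ρ.IsHermitian) {t : ℝ} (htr : ρ.trace = 1) (hdet : ρ.det = ((1 - t ^ 2) / 4 : ℝ)) :
    vnEntropy ρ = binEntropy ((1 + t) / 2) := by
  rw [vnEntropy, dif_pos hρ, Fin.sum_univ_two]
  have hsum : hρ.eigenvalues 0 + hρ.eigenvalues 1 = 1 := by
    have := hρ.trace_eq_sum_eigenvalues
    rw [htr, Fin.sum_univ_two] at this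
    simpa using (congrArg Complex.re this).symm
  have hprod : hρ.eigenvalues 0 * hρ.eigenvalues 1 = (1 - t ^ 2) / 4 := by
    have := hρ.det_eq_prod_eigenvalues
    rw [hdet, Fin.prod_univ_two] at this
    simpa [← Complex.ofReal_pow] using (congrArg Complex.re this).symm
  rw [eq_sub_of_add_eq' hsum] at hprod ⊢
  rw [← binEntropy_eq_negMulLog_add_negMulLog_one_sub]
  have hroots : (hρ.eigenvalues 0 - (1 + t) / 2) * (hρ.eigenvalues 0 - (1 - t) / 2) = 0 := by
    linear_combination -hprod
  rcases mul_eq_zero.1 hroots with h | h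
  · rw [sub_eq_zero.1 h]
  · rw [sub_eq_zero.1 h, ← binEntropy_one_sub]
    ring_nf

lemma blochRho_eq (s : Fin 3 → ℝ) : blochRho s =
    !![((1 + s 2) / 2 : ℂ), (s 0 - s 1 * Complex.I) / 2;
       (s 0 + s 1 * Complex.I) / 2, (1 - s 2) / 2] := by
  ext i j
  fin_cases i <;> fin_cases j <;> simp [blochRho, PX, PY, PZ] <;> ring

lemma isHermitian_blochRho (s : Fin 3 → ℝ) : (blochRho s).IsHermitian := by
  rw [blochRho_eq]
  ext i j
  fin_cases i <;> fin_cases j <;>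
    simp [Matrix.conjTranspose_apply, Complex.conj_I, sub_eq_add_neg]

lemma trace_blochRho (s : Fin 3 → ℝ) : (blochRho s).trace = 1 := by
  rw [blochRho_eq, Matrix.trace_fin_two]
  simp only [of_apply, cons_val_zero, cons_val_one, cons_val_fin_one, cons_val']
  ring

lemma norm2_nonneg (s : Fin 3 → ℝ) : 0 ≤ norm2 s :=
  Real.sqrt_nonneg _

lemma sq_norm2 (s : Fin 3 → ℝ) : norm2 s ^ 2 = ∑ i, s i ^ 2 :=
  Real.sq_sqrt (by positivity)

lemma det_blochRho (s : Fin 3 → ℝ) : (blochRho s).det = ((1 - norm2 s ^ 2) / 4 : ℝ) := by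
  rw [blochRho_eq, Matrix.det_fin_two_of, sq_norm2]
  push_cast [Fin.sum_univ_three]
  ring_nf
  rw [Complex.I_sq]
  ring

lemma vnEntropy_blochRho (s : Fin 3 → ℝ) :
    vnEntropy (blochRho s) = binEntropy ((1 + norm2 s) / 2) :=
  (isHermitian_blochRho s).vnEntropy_eq_binEntropy (trace_blochRho s) (det_blochRho s)

lemma strictAntiOn_binEntropy_one_add_div_two :
    StrictAntiOn (fun t ↦ binEntropy ((1 + t) / 2)) (Icc 0 1) := fun x hx y hy hxy ↦
  binEntropy_strictAntiOn ⟨by linarith [hx.1], by linarith [hx.2]⟩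
    ⟨by linarith [hy.1], by linarith [hy.2]⟩ (by linarith)

lemma continuous_norm1 : Continuous norm1 := by
  unfold norm1
  fun_prop

lemma continuous_norm2 : Continuous norm2 := by
  unfold norm2
  fun_prop

lemma continuous_dot3 (h : Fin 3 → ℝ) : Continuous (dot3 h) := by
  unfold dot3
  fun_prop

lemma abs_le_norm1 (s : Fin 3 → ℝ) (i : Fin 3) : |s i| ≤ norm1 s :=
  Finset.single_le_sum (f := fun j ↦ |s j|) (fun _ _ ↦ abs_nonneg _) (Finset.mem_univ i)

lemma norm2_le_norm1 (s : Fin 3 → ℝ) : norm2 s ≤ norm1 s := by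
  rw [norm2, Real.sqrt_le_iff]
  unfold norm1
  refine ⟨by positivity, ?_⟩
  simpa only [sq_abs] using Finset.sum_sq_le_sq_sum_of_nonneg fun i _ ↦ abs_nonneg (s i)

lemma isCompact_setOf_norm1_le_one : IsCompact {s : Fin 3 → ℝ | norm1 s ≤ 1} :=
  (isCompact_closedBall (0 : Fin 3 → ℝ) 1).of_isClosed_subset
    (isClosed_le continuous_norm1 continuous_const) fun s hs ↦
      mem_closedBall_zero_iff.2 <| (pi_norm_le_iff_of_nonneg zero_le_one).2 fun i ↦
        (Real.norm_eq_abs _).trans_le ((abs_le_norm1 s i).trans hs)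

def stabSlice (h : Fin 3 → ℝ) (E₀ : ℝ) : Set (Fin 3 → ℝ) := {s | norm1 s ≤ 1 ∧ dot3 h s = E₀}

lemma isCompact_stabSlice (h : Fin 3 → ℝ) (E₀ : ℝ) : IsCompact (stabSlice h E₀) :=
  isCompact_setOf_norm1_le_one.inter_right (isClosed_eq (continuous_dot3 h) continuous_const)

lemma norm2_le_one_of_mem_stabSlice {h : Fin 3 → ℝ} {E₀ : ℝ} {s : Fin 3 → ℝ}
    (hs : s ∈ stabSlice h E₀) : norm2 s ≤ 1 :=
  (norm2_le_norm1 s).trans hs.1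

lemma sInf_vnEntropy_blochRho_image {K : Set (Fin 3 → ℝ)} (hK : IsCompact K)
    (hne : K.Nonempty) (hK1 : ∀ s ∈ K, norm2 s ≤ 1) :
    sInf ((fun s ↦ vnEntropy (blochRho s)) '' K) =
      binEntropy ((1 + sSup (norm2 '' K)) / 2) := by
  obtain ⟨⟨s₀, hs₀, hR⟩, hle⟩ :=
    (hK.image continuous_norm2).isGreatest_sSup (hne.image norm2)
  have hmem : ∀ s ∈ K, norm2 s ∈ Icc 0 1 := fun s hs ↦ ⟨norm2_nonneg _, hK1 s hs⟩
  refine IsLeast.csInf_eq ⟨⟨s₀, hs₀, by simp only [vnEntropy_blochRho, hR]⟩, ?_⟩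
  rintro _ ⟨s, hs, rfl⟩
  simp only [vnEntropy_blochRho, ← hR]
  exact strictAntiOn_binEntropy_one_add_div_two.antitoneOn (hmem s hs) (hmem s₀ hs₀)
    (hR ▸ hle ⟨s, hs, rfl⟩)

theorem heat_witness_tightness_general (h : Fin 3 → ℝ) (E₀ : ℝ) (r : ℝ → Fin 3 → ℝ)
    (hcont : ContinuousOn r (Set.Icc 0 1))
    (hrad : ∀ lam ∈ Set.Icc (0 : ℝ) 1, norm2 (r lam) ≤ 1)
    (hfixE : ∀ lam ∈ Set.Icc (0 : ℝ) 1, dot3 h (r lam) = E₀)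
    (hmono : StrictMonoOn (fun lam => vnEntropy (blochRho (r lam))) (Set.Icc 0 1))
    (hend : norm1 (r 1) ≤ 1)
    (lamStar : ℝ)
    (hlamStar : lamStar = sInf {lam | lam ∈ Set.Icc (0 : ℝ) 1 ∧ norm1 (r lam) ≤ 1}) :
    ∃ lamCrt : ℝ, lamCrt ≤ lamStar ∧
      {lam | lam ∈ Set.Icc (0 : ℝ) 1 ∧
          vnEntropy (blochRho (r lam)) <
            sInf ((fun s => vnEntropy (blochRho s)) ''
              {s : Fin 3 → ℝ | norm1 s ≤ 1 ∧ dot3 h s = E₀})} = Set.Ico 0 lamCrt ∧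
      (lamCrt = lamStar ↔
        norm2 (r lamStar) =
          sSup (norm2 '' {s : Fin 3 → ℝ | norm1 s ≤ 1 ∧ dot3 h s = E₀})) := by
  rw [show {s : Fin 3 → ℝ | norm1 s ≤ 1 ∧ dot3 h s = E₀} = stabSlice h E₀ from rfl]
  have hstar : lamStar ∈ Icc 0 1 ∧ norm1 (r lamStar) ≤ 1 := by
    have hclosed : IsClosed {lam | lam ∈ Icc (0 : ℝ) 1 ∧ norm1 (r lam) ≤ 1} :=
      (continuous_norm1.comp_continuousOn hcont).preimage_isClosed_of_isClosed
        isClosed_Icc isClosed_Iic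
    exact hlamStar ▸
      hclosed.csInf_mem ⟨1, ⟨zero_le_one, le_rfl⟩, hend⟩ ⟨0, fun _ hx ↦ hx.1.1⟩
  have hrStar : r lamStar ∈ stabSlice h E₀ := ⟨hstar.2, hfixE lamStar hstar.1⟩
  obtain ⟨⟨s₀, hs₀, hR⟩, hRmax⟩ := (isCompact_stabSlice h E₀ |>.image continuous_norm2)
    |>.isGreatest_sSup ⟨_, r lamStar, hrStar, rfl⟩
  set R := sSup (norm2 '' stabSlice h E₀)
  have hR01 : R ∈ Icc 0 1 := hR ▸ ⟨norm2_nonneg _, norm2_le_one_of_mem_stabSlice hs₀⟩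
  have hr01 : ∀ lam ∈ Icc (0 : ℝ) 1, norm2 (r lam) ∈ Icc 0 1 :=
    fun lam hlam ↦ ⟨norm2_nonneg _, hrad lam hlam⟩
  have hanti : StrictAntiOn (fun lam ↦ norm2 (r lam)) (Icc 0 1) := fun a ha b hb hab ↦
    (strictAntiOn_binEntropy_one_add_div_two.lt_iff_gt (hr01 a ha) (hr01 b hb)).1
      (by simpa only [vnEntropy_blochRho] using hmono ha hb hab)
  obtain ⟨c, hc, hdetect, htight⟩ := hanti.exists_setOf_lt_eq_Ico
    (continuous_norm2.comp_continuousOn hcont) hstar.1 (hRmax ⟨_, hrStar, rfl⟩)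
  refine ⟨c, hc, ?_, htight⟩
  rw [← hdetect, sInf_vnEntropy_blochRho_image (isCompact_stabSlice h E₀) ⟨_, hrStar⟩
    fun _ ↦ norm2_le_one_of_mem_stabSlice]
  ext lam
  refine and_congr_right fun hlam ↦ ?_
  rw [vnEntropy_blochRho]
  exact strictAntiOn_binEntropy_one_add_div_two.lt_iff_gt (hr01 lam hlam) hR01

/-- optimality of the heat-based witness along a fixed-energy
noisy family of single-qubit states. -/
theorem heat_witness_tightness (h : Fin 3 → ℝ) (E₀ : ℝ) (r : ℝ → Fin 3 → ℝ)
    (hh : norm2 h = 1)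
    (hcont : ContinuousOn r (Set.Icc 0 1))
    (hrad : ∀ lam ∈ Set.Icc (0 : ℝ) 1, norm2 (r lam) ≤ 1)
    (hfixE : ∀ lam ∈ Set.Icc (0 : ℝ) 1, dot3 h (r lam) = E₀)
    (hmono : StrictMonoOn (fun lam => vnEntropy (blochRho (r lam))) (Set.Icc 0 1))
    (hend : norm1 (r 1) ≤ 1)
    (lamStar : ℝ)
    (hlamStar : lamStar = sInf {lam | lam ∈ Set.Icc (0 : ℝ) 1 ∧ norm1 (r lam) ≤ 1}) :
    ∃ lamCrt : ℝ, lamCrt ≤ lamStar ∧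
      {lam | lam ∈ Set.Icc (0 : ℝ) 1 ∧
          vnEntropy (blochRho (r lam)) <
            sInf ((fun s => vnEntropy (blochRho s)) ''
              {s : Fin 3 → ℝ | norm1 s ≤ 1 ∧ dot3 h s = E₀})} = Set.Ico 0 lamCrt ∧
      (lamCrt = lamStar ↔
        norm2 (r lamStar) =
          sSup (norm2 '' {s : Fin 3 → ℝ | norm1 s ≤ 1 ∧ dot3 h s = E₀})) :=
  heat_witness_tightness_general h E₀ r hcont hrad hfixE hmono hend lamStar hlamStar
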